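/- Let Ŝ be an asymmetric nonnegative balancing function and C* a minimizer of cut(C,V∖C)/Ŝ(C). Then the matrix F with F_1 = 1_{V∖C*} and F_l = α_l 1_{C*} (l=2,...,k, α_l>0, ∑_{l≥2}α_l=1) satisfies the row-simplex constraints and has objective value ∑_{l=1}^k TV(F_l)/S(F_l) = cut(C*,V∖C*)/Ŝ(V∖C*) + (k−1)·cut(C*,V∖C*)/Ŝ(C*). -/

import Mathlib

open Finset

/-- Lovasz extension of a set function `Sh` on `V = Fin n`. -/
noncomputable def lovasz {n : ℕ} (Sh : Finset (Fin n) → ℝ) (f : Fin n → ℝ) : ℝ :=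
  ∑ i : Fin n,
    f (Tuple.sort f i) *
      (Sh (if (i : ℕ) = 0 then Finset.univ
            else Finset.univ.filter
              (fun j => f (Tuple.sort f ⟨(i : ℕ) - 1, lt_of_le_of_lt (Nat.sub_le _ _) i.isLt⟩) < f j))
        - Sh (Finset.univ.filter (fun j => f (Tuple.sort f i) < f j)))

/-- cut(A,B) = ∑_{i∈A, j∈B} w_{ij}. -/
noncomputable def cutF {n : ℕ} (W : Matrix (Fin n) (Fin n) ℝ) (A B : Finset (Fin n)) : ℝ :=
  ∑ i ∈ A, ∑ j ∈ B, W i j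

/-- Total variation TV(f) = (1/2) ∑_{i,j} w_{ij} |f_i - f_j|. -/
noncomputable def tv {n : ℕ} (W : Matrix (Fin n) (Fin n) ℝ) (f : Fin n → ℝ) : ℝ :=
  (1 / 2) * ∑ i : Fin n, ∑ j : Fin n, W i j * |f i - f j|

/-- Indicator vector of a set. -/
noncomputable def indic {n : ℕ} (A : Finset (Fin n)) : Fin n → ℝ :=
  fun i => if i ∈ A then 1 else 0

/-! Each column of `F` is a positive multiple of an indicator. Total variation is absolutely
homogeneous and the Lovász extension positively homogeneous (scaling by `c > 0` does not change the
sorting permutation), so `TV(c • 1_A) / S(c • 1_A) = TV(1_A) / S(1_A) = cut(A, Aᶜ) / Ŝ(A)`, and the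
objective is one such ratio for `V ∖ C*` plus `k - 1` equal ones for `C*`. -/

section

variable {n : ℕ}

lemma indic_nonneg (A : Finset (Fin n)) (i : Fin n) : 0 ≤ indic A i := by
  unfold indic; split_ifs <;> norm_num

lemma indic_compl_add_indic (A : Finset (Fin n)) (i : Fin n) : indic Aᶜ i + indic A i = 1 := by
  by_cases hi : i ∈ A <;> simp [indic, hi]

lemma abs_indic_sub_indic (A : Finset (Fin n)) (i j : Fin n) :
    |indic A i - indic A j| = indic A i * indic Aᶜ j + indic Aᶜ i * indic A j := by
  by_cases hi : i ∈ A <;> by_cases hj : j ∈ A <;> simp [indic, hi, hj]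

lemma cutF_eq_sum_indic (W : Matrix (Fin n) (Fin n) ℝ) (A B : Finset (Fin n)) :
    cutF W A B = ∑ i, ∑ j, W i j * (indic A i * indic B j) := by
  simp [cutF, indic, sum_ite_mem]

lemma cutF_comm {W : Matrix (Fin n) (Fin n) ℝ} (hW : ∀ i j, W i j = W j i)
    (A B : Finset (Fin n)) : cutF W A B = cutF W B A := by
  unfold cutF
  exact sum_comm.trans (by simp only [hW])

lemma tv_smul (W : Matrix (Fin n) (Fin n) ℝ) (c : ℝ) (f : Fin n → ℝ) :
    tv W (c • f) = |c| * tv W f := by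
  simp only [tv, mul_sum]
  refine sum_congr rfl fun i _ => sum_congr rfl fun j _ => ?_
  rw [Pi.smul_apply, Pi.smul_apply, smul_eq_mul, smul_eq_mul, ← mul_sub, abs_mul]
  ring

lemma tv_indic {W : Matrix (Fin n) (Fin n) ℝ} (hW : ∀ i j, W i j = W j i) (A : Finset (Fin n)) :
    tv W (indic A) = cutF W A Aᶜ := by
  have hcut : cutF W A Aᶜ + cutF W Aᶜ A = ∑ i, ∑ j, W i j * |indic A i - indic A j| := by
    simp only [cutF_eq_sum_indic, abs_indic_sub_indic, mul_add, sum_add_distrib]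
  rw [tv, ← hcut, cutF_comm hW Aᶜ A]
  ring

lemma Tuple.sort_smul_of_pos {f : Fin n → ℝ} {c : ℝ} (hc : 0 < c) :
    Tuple.sort (c • f) = Tuple.sort f := by
  refine (Tuple.eq_sort_iff.2 ⟨(Tuple.monotone_sort f).const_mul hc.le, fun i j hij hfij => ?_⟩).symm
  exact (Tuple.eq_sort_iff.1 rfl).2 i j hij (mul_left_cancel₀ hc.ne' hfij)

lemma lovasz_smul (Sh : Finset (Fin n) → ℝ) {c : ℝ} (hc : 0 < c) (f : Fin n → ℝ) :
    lovasz Sh (c • f) = c * lovasz Sh f := by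
  simp only [lovasz, Tuple.sort_smul_of_pos hc, Pi.smul_apply, smul_eq_mul,
    mul_lt_mul_iff_right₀ hc, mul_sum, mul_assoc]

lemma indic_sort_apply (A : Finset (Fin n)) (i : Fin n) :
    indic A (Tuple.sort (indic A) i) = if (i : ℕ) < #Aᶜ then 0 else 1 := by
  have hzero : #{j | (indic A ∘ Tuple.sort (indic A)) j ≤ 0} = #Aᶜ :=
    card_equiv (Tuple.sort (indic A)) fun j => by
      rw [mem_filter, mem_compl]
      by_cases hj : Tuple.sort (indic A) j ∈ A <;> simp [indic, hj]
  have hlt := Tuple.lt_card_le_iff_apply_le_of_monotone (j := i) (a := 0)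
    (Tuple.monotone_sort (indic A))
  rw [hzero, Function.comp_apply] at hlt
  by_cases hi : Tuple.sort (indic A) i ∈ A <;> norm_num [indic, hi] at hlt ⊢ <;> omega

lemma lovasz_indic {Sh : Finset (Fin n) → ℝ} (h0 : Sh ∅ = 0) (A : Finset (Fin n)) :
    lovasz Sh (indic A) = Sh A := by
  have hsupp : ({j | (0 : ℝ) < indic A j} : Finset (Fin n)) = A := by
    ext j; rw [mem_filter]; by_cases hj : j ∈ A <;> simp [indic, hj]
  have htop : ({j | (1 : ℝ) < indic A j} : Finset (Fin n)) = ∅ := by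
    ext j; rw [mem_filter]; by_cases hj : j ∈ A <;> simp [indic, hj]
  unfold lovasz
  -- the sorted indicator jumps from 0 to 1 at position `#Aᶜ`, the only nonzero term
  rw [sum_congr rfl (g := fun i : Fin n => if (i : ℕ) = #Aᶜ then Sh A else 0)]
  · rw [Fin.sum_univ_eq_sum_range (fun i => if i = #Aᶜ then Sh A else 0), sum_ite_eq']
    split_ifs with hA
    · rfl
    · have hAc : Aᶜ = univ := eq_univ_of_card _ <| by
        simpa using (card_le_univ Aᶜ).antisymm (by simpa using hA)
      rw [(compl_eq_univ_iff _).1 hAc, h0]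
  intro i _
  simp only [indic_sort_apply]
  rcases lt_trichotomy (i : ℕ) #Aᶜ with hlt | heq | hgt
  · simp only [if_pos hlt, zero_mul, if_neg hlt.ne]
  · by_cases hi : (i : ℕ) = 0
    · have hA : A = univ := by simpa [hi] using heq.symm
      simp only [if_neg heq.not_lt, if_pos hi, if_pos heq, htop, h0, ← hA]
      ring
    · simp only [if_neg heq.not_lt, if_neg hi, if_pos (by omega : (i : ℕ) - 1 < #Aᶜ), if_pos heq,
        hsupp, htop, h0]
      ring
  · simp only [if_neg (by omega : ¬ (i : ℕ) < #Aᶜ), if_neg (by omega : ¬ (i : ℕ) = 0),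
      if_neg (by omega : ¬ (i : ℕ) - 1 < #Aᶜ), if_neg hgt.ne', htop, sub_self, mul_zero]

lemma tv_div_lovasz_smul_indic {W : Matrix (Fin n) (Fin n) ℝ} (hW : ∀ i j, W i j = W j i)
    {Sh : Finset (Fin n) → ℝ} (h0 : Sh ∅ = 0) (A : Finset (Fin n)) {c : ℝ} (hc : 0 < c) :
    tv W (c • indic A) / lovasz Sh (c • indic A) = cutF W A Aᶜ / Sh A := by
  rw [tv_smul, lovasz_smul Sh hc, tv_indic hW, lovasz_indic h0, abs_of_pos hc,
    mul_div_mul_left _ _ hc.ne']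

end

theorem degenerate_solution_asymmetric_general {n k : ℕ} [NeZero k]
    (W : Matrix (Fin n) (Fin n) ℝ)
    (hWsym : ∀ i j, W i j = W j i)
    (Sh : Finset (Fin n) → ℝ) (h0 : Sh ∅ = 0)
    (Cs : Finset (Fin n))
    (α : Fin k → ℝ) (hα : ∀ l, l ≠ 0 → 0 < α l)
    (hαsum : ∑ l ∈ Finset.univ.filter (fun l => l ≠ (0 : Fin k)), α l = 1)
    (F : Fin n → Fin k → ℝ)
    (hF0 : ∀ i, F i 0 = indic Csᶜ i)
    (hFl : ∀ i l, l ≠ 0 → F i l = α l * indic Cs i) :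
    (∀ i l, 0 ≤ F i l) ∧ (∀ i, ∑ l, F i l = 1) ∧
    (∑ l, tv W (fun i => F i l) / lovasz Sh (fun i => F i l)) =
      cutF W Cs Csᶜ / Sh Csᶜ + (k - 1 : ℝ) * (cutF W Cs Csᶜ / Sh Cs) := by
  rw [filter_ne'] at hαsum
  have hcol : ∀ l ∈ univ.erase 0, (fun i => F i l) = α l • indic Cs :=
    fun l hl => funext fun i => hFl i l (ne_of_mem_erase hl)
  refine ⟨fun i l => ?_, fun i => ?_, ?_⟩
  · rcases eq_or_ne l 0 with rfl | hl
    · exact hF0 i ▸ indic_nonneg _ _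
    · exact hFl i l hl ▸ mul_nonneg (hα l hl).le (indic_nonneg _ _)
  · rw [← add_sum_erase _ _ (mem_univ 0), hF0, ← indic_compl_add_indic Cs i,
      sum_congr rfl fun l hl => congrFun (hcol l hl) i]
    simp only [Pi.smul_apply, smul_eq_mul, ← sum_mul, hαsum, one_mul]
  · have hratio : ∀ l ∈ univ.erase 0,
        tv W (fun i => F i l) / lovasz Sh (fun i => F i l) = cutF W Cs Csᶜ / Sh Cs :=
      fun l hl => hcol l hl ▸ tv_div_lovasz_smul_indic hWsym h0 Cs (hα l (ne_of_mem_erase hl))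
    rw [← add_sum_erase _ _ (mem_univ 0), sum_congr rfl hratio, sum_const,
      card_erase_of_mem (mem_univ _), card_univ, Fintype.card_fin, nsmul_eq_mul,
      Nat.cast_sub NeZero.one_le, Nat.cast_one, funext hF0, tv_indic hWsym, lovasz_indic h0,
      compl_compl, cutF_comm hWsym]

/-- For an asymmetric balancing function and an optimal 2-cut set C*, the matrix
F₁ = 1_{V∖C*}, F_l = α_l·1_{C*} (l ≥ 2) is row-simplex feasible with objective
cut(C*,V∖C*)/Ŝ(V∖C*) + (k−1)·cut(C*,V∖C*)/Ŝ(C*). -/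
theorem degenerate_solution_asymmetric {n k : ℕ} [NeZero k] (hk : 2 ≤ k)
    (W : Matrix (Fin n) (Fin n) ℝ)
    (hW : ∀ i j, 0 ≤ W i j) (hWsym : ∀ i j, W i j = W j i)
    (Sh : Finset (Fin n) → ℝ) (h0 : Sh ∅ = 0) (hnn : ∀ A, 0 ≤ Sh A)
    (hpos : ∀ C : Finset (Fin n), C.Nonempty → C ≠ Finset.univ → 0 < Sh C)
    (Cs : Finset (Fin n)) (hCne : Cs.Nonempty) (hCp : Cs ≠ Finset.univ)
    (hmin : ∀ C : Finset (Fin n), C.Nonempty → C ≠ Finset.univ →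
      cutF W Cs Csᶜ / Sh Cs ≤ cutF W C Cᶜ / Sh C)
    (α : Fin k → ℝ) (hα : ∀ l, l ≠ 0 → 0 < α l)
    (hαsum : ∑ l ∈ Finset.univ.filter (fun l => l ≠ (0 : Fin k)), α l = 1)
    (F : Fin n → Fin k → ℝ)
    (hF0 : ∀ i, F i 0 = indic Csᶜ i)
    (hFl : ∀ i l, l ≠ 0 → F i l = α l * indic Cs i) :
    (∀ i l, 0 ≤ F i l) ∧ (∀ i, ∑ l, F i l = 1) ∧
    (∑ l, tv W (fun i => F i l) / lovasz Sh (fun i => F i l)) =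
      cutF W Cs Csᶜ / Sh Csᶜ + (k - 1 : ℝ) * (cutF W Cs Csᶜ / Sh Cs) :=
  degenerate_solution_asymmetric_general W hWsym Sh h0 Cs α hα hαsum F hF0 hFl
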